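/- arXiv:1611.04070 — 2 statements merged into one kernel-verified Lean document; each statement's English description precedes it below -/
import Mathlib

section
/- The subalgebras A₁ = ℂH_β⊕ℂX_β⊕ℂX_{−β} and Ã₁ = ℂH_α⊕ℂX_α⊕ℂX_{−α} of G₂ (the long-root and short-root sl₂-triples) are not conjugate: there is no Lie algebra automorphism s of G₂ with s(A₁)=Ã₁. -/
namespace G2Formal

/-- The positive roots of `G₂`: the pair `(k, l)` encodes `k•α + l•β`,
where `α` is the short simple root and `β` is the long simple root. -/
def PhiP : Set (ℤ × ℤ) := {(1,0), (0,1), (1,1), (2,1), (3,1), (3,2)}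

/-- All twelve roots of `G₂`. -/
def Phi : Set (ℤ × ℤ) :=
  {(1,0), (0,1), (1,1), (2,1), (3,1), (3,2),
   (-1,0), (0,-1), (-1,-1), (-2,-1), (-3,-1), (-3,-2)}

/-- The invariant inner product on the root space, normalized by `(α,α) = 1`,
`(β,β) = 3`, `(α,β) = -3/2`. -/
def ip (μ ν : ℤ × ℤ) : ℚ :=
  (μ.1 * ν.1 : ℤ) - (3/2 : ℚ) * ((μ.1 * ν.2 + μ.2 * ν.1 : ℤ)) + 3 * ((μ.2 * ν.2 : ℤ) : ℚ)

/-- The Cartan pairing `⟨ν, μ^∨⟩ = 2(μ,ν)/(μ,μ)`. -/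
def cart (μ ν : ℤ × ℤ) : ℚ := 2 * ip μ ν / ip μ μ

/-- Base table of structure constants `N_{μ,ν}` from the multiplication table of `G₂`. -/
def N0 (μ ν : ℤ × ℤ) : ℤ :=
  if μ = (0,1) ∧ ν = (1,0) then 1
  else if μ = (0,1) ∧ ν = (3,1) then 1
  else if μ = (3,1) ∧ ν = (-3,-2) then 1
  else if μ = (2,1) ∧ ν = (-3,-1) then 1
  else if μ = (2,1) ∧ ν = (-3,-2) then 1
  else if μ = (-3,-2) ∧ ν = (1,1) then 1
  else if μ = (-3,-2) ∧ ν = (0,1) then 1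
  else if μ = (-3,-1) ∧ ν = (1,0) then 1
  else if μ = (-1,-1) ∧ ν = (0,1) then 1
  else if μ = (1,1) ∧ ν = (1,0) then 2
  else if μ = (1,0) ∧ ν = (-2,-1) then 2
  else if μ = (-2,-1) ∧ ν = (1,1) then 2
  else if μ = (1,0) ∧ ν = (2,1) then 3
  else if μ = (1,0) ∧ ν = (-1,-1) then 3
  else if μ = (1,1) ∧ ν = (2,1) then 3
  else 0

/-- The full table of structure constants, obtained from the base table via
`N_{μ,ν} = -N_{ν,μ} = -N_{-μ,-ν}`. -/
def Nc (μ ν : ℤ × ℤ) : ℤ := N0 μ ν - N0 ν μ - N0 (-μ) (-ν) + N0 (-ν) (-μ)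

variable {L : Type*} [LieRing L] [LieAlgebra ℂ L]

/-- The coroot `H_μ` expressed in the basis `H_α`, `H_β` of the Cartan subalgebra. -/
noncomputable def Hr (Hα Hβ : L) (μ : ℤ × ℤ) : L :=
  ((((μ.1 : ℚ) / ip μ μ : ℚ) : ℂ)) • Hα + ((((3 * μ.2 : ℚ) / ip μ μ : ℚ) : ℂ)) • Hβ

/-- The Chevalley basis of `G₂` as a family indexed by `Fin 14`. -/
def chev (Hα Hβ : L) (X : ℤ × ℤ → L) : Fin 14 → L :=
  ![Hα, Hβ, X (1,0), X (-1,0), X (0,1), X (0,-1), X (1,1), X (-1,-1),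
    X (2,1), X (-2,-1), X (3,1), X (-3,-1), X (3,2), X (-3,-2)]

/-- `IsG2 Hα Hβ X` says that the complex Lie algebra `L`, together with the elements
`Hα`, `Hβ` and the root vectors `X γ` (for `γ` a root of `G₂`), realizes the multiplication
table of the simple complex Lie algebra of type `G₂` in its Chevalley basis, and that the
fourteen Chevalley basis vectors form a basis of `L`.  Any such `L` is a copy of `G₂`. -/
structure IsG2 (Hα Hβ : L) (X : ℤ × ℤ → L) : Prop where
  indep : LinearIndependent ℂ (chev Hα Hβ X)
  span_top : Submodule.span ℂ (Set.range (chev Hα Hβ X)) = ⊤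
  bracket_hh : ⁅Hα, Hβ⁆ = 0
  bracket_hx : ∀ μ ∈ Phi, ∀ ν ∈ Phi, ⁅Hr Hα Hβ μ, X ν⁆ = ((cart μ ν : ℚ) : ℂ) • X ν
  bracket_xnegx : ∀ μ ∈ Phi, ⁅X μ, X (-μ)⁆ = Hr Hα Hβ μ
  bracket_xx : ∀ μ ∈ Phi, ∀ ν ∈ Phi, μ + ν ∈ Phi →
    ⁅X μ, X ν⁆ = ((Nc μ ν : ℤ) : ℂ) • X (μ + ν)
  bracket_xx_zero : ∀ μ ∈ Phi, ∀ ν ∈ Phi, μ + ν ≠ 0 → μ + ν ∉ Phi → ⁅X μ, X ν⁆ = 0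

/-- Two Lie subalgebras of `L` are conjugate if some Lie algebra automorphism of `L`
maps one onto the other. -/
def SubalgConj (g k : LieSubalgebra ℂ L) : Prop :=
  ∃ s : L ≃ₗ⁅ℂ⁆ L, g.map s.toLieHom = k

/-- A submodule is conjugate (as a subalgebra) to a given submodule if some Lie algebra
automorphism of `L` maps it onto the latter. -/
def ModConj (W W' : Submodule ℂ L) : Prop :=
  ∃ s : L ≃ₗ⁅ℂ⁆ L, W.map (s.toLinearEquiv : L →ₗ[ℂ] L) = W'

/-- A Lie subalgebra of `G₂` is *regular* if it is conjugate to a subalgebra of the form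
`g(Σ, W) = W ⊕ ⊕_{γ ∈ Σ} ℂ X_γ` where `Σ ⊆ Φ` is closed and `W` is a subspace of the
Cartan subalgebra containing `[X_γ, X_{-γ}]` for every `γ ∈ Σ ∩ (-Σ)`. -/
def IsRegularSubalgebra (Hα Hβ : L) (X : ℤ × ℤ → L) (g : LieSubalgebra ℂ L) : Prop :=
  ∃ (S : Set (ℤ × ℤ)) (W : Submodule ℂ L) (k : LieSubalgebra ℂ L),
    S ⊆ Phi ∧
    (∀ x ∈ S, ∀ y ∈ S, x + y ∈ Phi → x + y ∈ S) ∧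
    W ≤ Submodule.span ℂ {Hα, Hβ} ∧
    (∀ γ ∈ S, -γ ∈ S → ⁅X γ, X (-γ)⁆ ∈ W) ∧
    k.toSubmodule = W ⊔ Submodule.span ℂ (X '' S) ∧
    SubalgConj g k

/-- A Levi subalgebra of a Lie algebra `g`: a semisimple subalgebra which is a vector
space complement of the solvable radical. -/
def IsLeviOf (g : LieSubalgebra ℂ L) (m : LieSubalgebra ℂ ↥g) : Prop :=
  LieAlgebra.IsSemisimple ℂ ↥m ∧
  IsCompl m.toSubmodule (LieAlgebra.radical ℂ ↥g).toSubmodule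

end G2Formal

/-!
An automorphism `s` preserves the Killing form `κ`. For an sl₂-triple `(h, e, f)` and
`x = a h + b e + c f`, invariance of `κ` gives `κ(x, x) = (a² + b c) κ(h, h)`, and the bracket
relations give `(ad x)³ = 4 (a² + b c) ad x` on `span {h, e, f}`. If `s(A₁) = Ã₁`, then
`x = s(H_β) ∈ Ã₁` has the eigenvalue `2` on the nonzero vector `s(X_β) ∈ Ã₁`, so `a² + b c = 1`
and `κ(H_β, H_β) = κ(x, x) = κ(H_α, H_α)`. But `κ(H_β, H_β) = 16` while `κ(H_α, H_α) = 48`.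
-/

namespace IsSl2Triple

section CommRing

variable {R L : Type*} [CommRing R] [LieRing L] [LieAlgebra R L] {h e f : L}

lemma lie_smul_add_smul_add_smul (t : IsSl2Triple h e f) (a b c p q r : R) :
    ⁅a • h + b • e + c • f, p • h + q • e + r • f⁆ =
      (b * r - c * q) • h + (2 * (a * q - b * p)) • e + (2 * (c * p - a * r)) • f := by
  have he : ⁅h, e⁆ = (2 : R) • e := t.lie_h_e_smul R
  have hf : ⁅h, f⁆ = -((2 : R) • f) := t.lie_lie_smul_f R
  have eh : ⁅e, h⁆ = -((2 : R) • e) := by rw [← lie_skew, he]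
  have fh : ⁅f, h⁆ = (2 : R) • f := by rw [← lie_skew, hf, neg_neg]
  have fe : ⁅f, e⁆ = -h := by rw [← lie_skew, t.lie_e_f]
  simp only [lie_add, add_lie, lie_smul, smul_lie, lie_self, he, hf, eh, fh, fe, t.lie_e_f]
  module

lemma lie_lie_lie_eq_smul_lie (t : IsSl2Triple h e f) (a b c : R) {y : L}
    (hy : y ∈ Submodule.span R {h, e, f}) :
    ⁅a • h + b • e + c • f, ⁅a • h + b • e + c • f, ⁅a • h + b • e + c • f, y⁆⁆⁆ =
      (4 * (a ^ 2 + b * c)) • ⁅a • h + b • e + c • f, y⁆ := by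
  obtain ⟨p, q, r, rfl⟩ := Submodule.mem_span_triple.mp hy
  simp only [t.lie_smul_add_smul_add_smul]
  module

end CommRing

variable {K L : Type*} [Field K] [NeZero (2 : K)] [LieRing L] [LieAlgebra K L] {h e f : L}

lemma sq_add_mul_eq_one_of_lie_eq_two_smul (t : IsSl2Triple h e f) {a b c : K} {y : L}
    (hy : y ∈ Submodule.span K {h, e, f}) (hy₀ : y ≠ 0)
    (hxy : ⁅a • h + b • e + c • f, y⁆ = (2 : K) • y) : a ^ 2 + b * c = 1 := by
  have key := t.lie_lie_lie_eq_smul_lie a b c hy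
  simp only [hxy, lie_smul, smul_smul] at key
  -- `2 ^ 3` rather than `8`, so that `2 ≠ 0` is all that is needed to cancel it
  have : (2 ^ 3 * (a ^ 2 + b * c - 1)) • y = 0 := by linear_combination (norm := module) -key
  simpa [hy₀, sub_eq_zero, two_ne_zero] using this

lemma traceForm_smul_add_smul_add_smul (M : Type*) [AddCommGroup M] [Module K M]
    [LieRingModule L M] [LieModule K L M] (t : IsSl2Triple h e f) (a b c : K) :
    LieModule.traceForm K L M (a • h + b • e + c • f) (a • h + b • e + c • f) =
      (a ^ 2 + b * c) * LieModule.traceForm K L M h h := by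
  set B := LieModule.traceForm K L M
  have inv (x y z : L) : B ⁅x, y⁆ z = B x ⁅y, z⁆ := LieModule.traceForm_apply_lie_apply K L M x y z
  have comm (x y : L) : B x y = B y x := LieModule.traceForm_comm K L M x y
  have he : ⁅h, e⁆ = (2 : K) • e := t.lie_h_e_smul K
  have hf : ⁅h, f⁆ = -((2 : K) • f) := t.lie_lie_smul_f K
  have Bhe : B h e = 0 := by simpa [he, two_ne_zero] using inv h h e
  have Bhf : B h f = 0 := by simpa [hf, two_ne_zero] using inv h h f
  have Bee : B e e = 0 := by simpa [he, two_ne_zero] using inv h e e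
  have Bff : B f f = 0 := by simpa [hf, two_ne_zero] using inv h f f
  have Bhh : B h h = 2 * B e f := by
    have := inv e f h
    rwa [t.lie_e_f, ← lie_skew, hf, neg_neg, map_smul, smul_eq_mul] at this
  simp only [map_add, map_smul, LinearMap.add_apply, LinearMap.smul_apply, smul_eq_mul]
  rw [comm e h, comm f h, comm f e]
  linear_combination (-b * c) * Bhh + b ^ 2 * Bee + c ^ 2 * Bff + (2 * a * b) * Bhe +
    (2 * a * c) * Bhf

end IsSl2Triple

lemma LinearMap.trace_eq_sum_of_apply_basis_eq_smul {ι R M : Type*} [Fintype ι] [DecidableEq ι]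
    [CommRing R] [AddCommGroup M] [Module R M] (b : Module.Basis ι R M) {f : M →ₗ[R] M}
    {d : ι → R} (hf : ∀ i, f (b i) = d i • b i) : LinearMap.trace R M f = ∑ i, d i := by
  rw [LinearMap.trace_eq_matrix_trace R b, ← Matrix.trace_diagonal d]
  congr 1
  ext i j
  by_cases hij : i = j <;> simp [LinearMap.toMatrix_apply, hf, hij]

namespace G2Formal

variable {L : Type*} [LieRing L] [LieAlgebra ℂ L] {Hα Hβ : L} {X : ℤ × ℤ → L}

lemma ip_self_pos {μ : ℤ × ℤ} (hμ : μ ≠ 0) : 0 < ip μ μ := by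
  obtain ⟨m, n⟩ := μ
  have key : ip (m, n) (m, n) = ((2 * m - 3 * n) ^ 2 + 3 * n ^ 2) / 4 := by
    simp only [ip]; push_cast; ring
  rw [key]
  rcases eq_or_ne n 0 with rfl | hn
  · have hm : (m : ℚ) ≠ 0 := by exact_mod_cast fun hm ↦ hμ (by simp [hm])
    norm_num
    positivity
  · positivity

lemma ip_neg_right (μ ν : ℤ × ℤ) : ip μ (-ν) = -ip μ ν := by
  simp only [ip, Prod.fst_neg, Prod.snd_neg]; push_cast; ring

lemma cart_self {μ : ℤ × ℤ} (hμ : μ ≠ 0) : cart μ μ = 2 := by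
  rw [cart, mul_div_assoc, div_self (ip_self_pos hμ).ne', mul_one]

lemma cart_neg_self {μ : ℤ × ℤ} (hμ : μ ≠ 0) : cart μ (-μ) = -2 := by
  rw [cart, ip_neg_right, mul_neg, neg_div, mul_div_assoc, div_self (ip_self_pos hμ).ne', mul_one]

lemma cart_zero_right (μ : ℤ × ℤ) : cart μ 0 = 0 := by simp [cart, ip]

lemma zero_notMem_Phi : (0 : ℤ × ℤ) ∉ Phi := by simp [Phi, Prod.ext_iff]

lemma neg_mem_Phi {μ : ℤ × ℤ} (hμ : μ ∈ Phi) : -μ ∈ Phi := by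
  simp only [Phi, Set.mem_insert_iff, Set.mem_singleton_iff] at hμ ⊢
  rcases hμ with rfl | rfl | rfl | rfl | rfl | rfl | rfl | rfl | rfl | rfl | rfl | rfl <;> simp

lemma Hr_one_zero : Hr Hα Hβ (1, 0) = Hα := by norm_num [Hr, ip]

lemma Hr_zero_one : Hr Hα Hβ (0, 1) = Hβ := by norm_num [Hr, ip]

/-- `0` for the two Cartan elements, so that `cart μ (chevRoot i)` is the eigenvalue of
`ad (Hr Hα Hβ μ)` on `chev Hα Hβ X i` for every `i`. -/
def chevRoot : Fin 14 → ℤ × ℤ :=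
  ![0, 0, (1,0), (-1,0), (0,1), (0,-1), (1,1), (-1,-1), (2,1), (-2,-1), (3,1), (-3,-1), (3,2),
    (-3,-2)]

namespace IsG2

noncomputable def basis (hG2 : IsG2 Hα Hβ X) : Module.Basis (Fin 14) ℂ L :=
  Module.Basis.mk hG2.indep hG2.span_top.ge

lemma X_ne_zero (hG2 : IsG2 Hα Hβ X) {μ : ℤ × ℤ} (hμ : μ ∈ Phi) : X μ ≠ 0 := by
  have hrange : X μ ∈ Set.range (chev Hα Hβ X) := by
    simp only [Phi, Set.mem_insert_iff, Set.mem_singleton_iff] at hμ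
    rcases hμ with rfl | rfl | rfl | rfl | rfl | rfl | rfl | rfl | rfl | rfl | rfl | rfl
    all_goals simp [chev]
  obtain ⟨i, hi⟩ := hrange
  exact hi ▸ hG2.indep.ne_zero i

lemma isSl2Triple (hG2 : IsG2 Hα Hβ X) {μ : ℤ × ℤ} (hμ : μ ∈ Phi) :
    IsSl2Triple (Hr Hα Hβ μ) (X μ) (X (-μ)) := by
  have hμ₀ : μ ≠ 0 := fun h ↦ zero_notMem_Phi (h ▸ hμ)
  have lie_h_e : ⁅Hr Hα Hβ μ, X μ⁆ = 2 • X μ := by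
    rw [hG2.bracket_hx μ hμ μ hμ, cart_self hμ₀]; norm_num [two_smul]
  refine ⟨fun h ↦ hG2.X_ne_zero hμ ?_, hG2.bracket_xnegx μ hμ, lie_h_e, ?_⟩
  · rw [h, zero_lie, two_nsmul, ← two_smul ℂ] at lie_h_e
    exact (smul_eq_zero.mp lie_h_e.symm).resolve_left two_ne_zero
  · rw [hG2.bracket_hx μ hμ (-μ) (neg_mem_Phi hμ), cart_neg_self hμ₀]; norm_num [two_smul]

lemma lie_Hr_chev (hG2 : IsG2 Hα Hβ X) {μ : ℤ × ℤ} (hμ : μ ∈ Phi) (i : Fin 14) :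
    ⁅Hr Hα Hβ μ, chev Hα Hβ X i⁆ = ((cart μ (chevRoot i) : ℚ) : ℂ) • chev Hα Hβ X i := by
  have hβα : ⁅Hβ, Hα⁆ = 0 := by rw [← lie_skew, hG2.bracket_hh, neg_zero]
  fin_cases i
  all_goals first
    | exact hG2.bracket_hx μ hμ _ (by simp [Phi])
    | simp [Hr, chev, chevRoot, cart_zero_right, hG2.bracket_hh, hβα]

lemma killingForm_Hr (hG2 : IsG2 Hα Hβ X) {μ : ℤ × ℤ} (hμ : μ ∈ Phi) :
    killingForm ℂ L (Hr Hα Hβ μ) (Hr Hα Hβ μ) = ∑ i, ((cart μ (chevRoot i) ^ 2 : ℚ) : ℂ) := by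
  rw [killingForm_apply_apply]
  refine LinearMap.trace_eq_sum_of_apply_basis_eq_smul hG2.basis fun i ↦ ?_
  simp [IsG2.basis, hG2.lie_Hr_chev hμ, smul_smul, sq]

lemma killingForm_Hα (hG2 : IsG2 Hα Hβ X) : killingForm ℂ L Hα Hα = 48 := by
  have h := hG2.killingForm_Hr (μ := (1, 0)) (by simp [Phi])
  rw [Hr_one_zero] at h
  rw [h]
  simp [Fin.sum_univ_succ, chevRoot, cart, ip]
  norm_num

lemma killingForm_Hβ (hG2 : IsG2 Hα Hβ X) : killingForm ℂ L Hβ Hβ = 16 := by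
  have h := hG2.killingForm_Hr (μ := (0, 1)) (by simp [Phi])
  rw [Hr_zero_one] at h
  rw [h]
  simp [Fin.sum_univ_succ, chevRoot, cart, ip]
  norm_num

end IsG2

/-- **Theorem.**  The long-root subalgebra `A₁ = ℂH_β ⊕ ℂX_β ⊕ ℂX_{-β}` and the short-root
subalgebra `Ã₁ = ℂH_α ⊕ ℂX_α ⊕ ℂX_{-α}` of `G₂` are not conjugate: no automorphism of `G₂`
maps one onto the other. -/
theorem A1_not_conjugate_to_tildeA1
    {L : Type*} [LieRing L] [LieAlgebra ℂ L] (Hα Hβ : L) (X : ℤ × ℤ → L)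
    (hG2 : IsG2 Hα Hβ X) :
    ¬ ModConj (Submodule.span ℂ {Hβ, X (0,1), X (0,-1)})
        (Submodule.span ℂ {Hα, X (1,0), X (-1,0)}) := by
  rintro ⟨s, hs⟩
  have mem_image {x : L} (hx : x ∈ ({Hβ, X (0,1), X (0,-1)} : Set L)) :
      s x ∈ Submodule.span ℂ {Hα, X (1,0), X (-1,0)} :=
    hs ▸ Submodule.mem_map_of_mem (Submodule.subset_span hx)
  have short : IsSl2Triple Hα (X (1,0)) (X (-1,0)) := by
    simpa [Hr_one_zero] using hG2.isSl2Triple (μ := (1, 0)) (by simp [Phi])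
  have long : IsSl2Triple Hβ (X (0,1)) (X (0,-1)) := by
    simpa [Hr_zero_one] using hG2.isSl2Triple (μ := (0, 1)) (by simp [Phi])
  obtain ⟨a, b, c, hsH⟩ := Submodule.mem_span_triple.mp (mem_image (x := Hβ) (by simp))
  have hnorm : a ^ 2 + b * c = 1 := by
    refine short.sq_add_mul_eq_one_of_lie_eq_two_smul (mem_image (x := X (0,1)) (by simp))
      (by simpa using long.e_ne_zero) ?_
    rw [hsH, ← LieEquiv.map_lie, long.lie_h_e_smul ℂ, map_smul]
  have hK := LieAlgebra.killingForm_of_equiv_apply s Hβ Hβ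
  rw [← hsH, short.traceForm_smul_add_smul_add_smul L, hnorm, hG2.killingForm_Hα,
    hG2.killingForm_Hβ] at hK
  norm_num at hK

end G2Formal
end

section
/- Let A₁⁴ = ℂf⊕ℂe₊⊕ℂe₋ with f = 2H_α + 2H_β, e₊ = √2·(X_{−β} + X_{3α+2β}), e₋ = √2·(X_β + X_{−(3α+2β)}). Then under the adjoint action G₂ = A₁⁴ ⊕ V₁ ⊕ V₂ ⊕ V₃ as A₁⁴-modules, where V₁ = ℂX_α⊕ℂX_{α+β}⊕ℂX_{−(2α+β)}, V₂ = ℂX_{−α}⊕ℂX_{−(α+β)}⊕ℂX_{2α+β} and V₃ = ℂX_{3α+β}⊕ℂX_{−(3α+β)}⊕ℂH_{α+β}⊕ℂ(X_β−X_{−(3α+2β)})⊕ℂ(X_{−β}−X_{3α+2β}) are A₁⁴-submodules, V₁ and V₂ are irreducible of dimension 3 (each isomorphic to D₁) and V₃ is irreducible of dimension 5 (isomorphic to D₂). -/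
/-
Under `ad f` each root vector `X_{kα+lβ}` is an eigenvector of weight `2(k - l)`, while `ad e₊`,
`ad e₋` raise and lower weights by `2`. In each `Vᵢ` the listed vectors form a weight string
`n, n - 2, …, -n` (`n = 2, 2, 4`) on which `e₊` and `e₋` send every vector to a nonzero multiple of
its neighbour. Such a span is invariant, and it is irreducible: the weights are distinct, so an
invariant subspace contains the weight components of each of its vectors, hence some `v i`, and
then the whole string. The four pieces span `G₂`, since `f`, `e±` and the `Vᵢ` recover the
Chevalley basis, and have dimensions at most `3 + 3 + 3 + 5 = 14 = dim G₂`; so the dimensions are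
exact and the sum is direct.
-/

namespace G2Formal

variable {L : Type*} [LieRing L] [LieAlgebra ℂ L]

variable {L : Type*} [LieRing L] [LieAlgebra ℂ L]

/-- `V₁⁴ = ℂX_α ⊕ ℂX_{α+β} ⊕ ℂX_{-(2α+β)}`. -/
def V1four (X : ℤ × ℤ → L) : Submodule ℂ L :=
  Submodule.span ℂ {X (1,0), X (1,1), X (-2,-1)}

/-- `V₂⁴ = ℂX_{-α} ⊕ ℂX_{-(α+β)} ⊕ ℂX_{2α+β}`. -/
def V2four (X : ℤ × ℤ → L) : Submodule ℂ L :=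
  Submodule.span ℂ {X (-1,0), X (-1,-1), X (2,1)}

/-- `V₃⁴ = ℂX_{3α+β} ⊕ ℂX_{-(3α+β)} ⊕ ℂH_{α+β} ⊕ ℂ(X_β - X_{-(3α+2β)}) ⊕ ℂ(X_{-β} - X_{3α+2β})`,
where `H_{α+β} = H_α + 3H_β`. -/
def V3four (Hα Hβ : L) (X : ℤ × ℤ → L) : Submodule ℂ L :=
  Submodule.span ℂ
    {X (3,1), X (-3,-1), Hα + (3:ℂ) • Hβ, X (0,1) - X (-3,-2), X (0,-1) - X (3,2)}

open Submodule Set LieAlgebra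

section WeightString

variable {K M : Type*} [Field K] [AddCommGroup M] [Module K M]

theorem mem_of_sum_mem_of_eigenvectors {ι : Type*} (φ : Module.End K M) {U : Submodule K M}
    (hU : ∀ x ∈ U, φ x ∈ U) {μ : ι → K} (hμ : Function.Injective μ) (s : Finset ι) :
    ∀ w : ι → M, (∀ i, φ (w i) = μ i • w i) → ∑ i ∈ s, w i ∈ U → ∀ i ∈ s, w i ∈ U := by
  classical
  induction s using Finset.induction_on with
  | empty => simp
  | insert j s hj ih =>
    intro w hw hsum
    rw [Finset.sum_insert hj] at hsum
    -- `φ - μ j` kills `w j` and rescales every other `w i` by `μ i - μ j ≠ 0`.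
    have hshift : (φ - μ j • 1) (w j + ∑ i ∈ s, w i) = ∑ i ∈ s, (μ i - μ j) • w i := by
      simp [hw, sub_smul, Finset.sum_sub_distrib, Finset.smul_sum]
    have hrest : ∀ i ∈ s, w i ∈ U := by
      have key := ih (fun i => (μ i - μ j) • w i) (fun i => by rw [map_smul, hw, smul_comm])
        (hshift ▸ sub_mem (hU _ hsum) (U.smul_mem _ hsum))
      intro i hi
      exact (U.smul_mem_iff (sub_ne_zero.mpr (hμ.ne (ne_of_mem_of_not_mem hi hj)))).mp (key i hi)
    intro i hi
    rcases Finset.mem_insert.mp hi with rfl | hi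
    · simpa using sub_mem hsum (sum_mem hrest)
    · exact hrest i hi

/-- `v 0, …, v n` are `h`-weight vectors of weights `n, n - 2, …, -n`, and `e`, `f` move each of
them to a nonzero multiple of its neighbour: up to rescaling, the standard basis of the irreducible
`sl₂`-module `D_{n/2}` of highest weight `n`. -/
structure IsWeightString (h e f : Module.End K M) {n : ℕ} (v : Fin (n + 1) → M) : Prop where
  apply_h : ∀ i, h (v i) = ((n : K) - 2 * (i : ℕ)) • v i
  apply_e_zero : e (v 0) = 0
  apply_e_succ : ∀ k : Fin n, ∃ c ≠ (0 : K), e (v k.succ) = c • v k.castSucc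
  apply_f_last : f (v (Fin.last n)) = 0
  apply_f_castSucc : ∀ k : Fin n, ∃ c ≠ (0 : K), f (v k.castSucc) = c • v k.succ

theorem apply_mem_span_range {ι : Type*} {v : ι → M} {g : Module.End K M}
    (hg : ∀ i, g (v i) ∈ span K (range v)) {x : M} (hx : x ∈ span K (range v)) :
    g x ∈ span K (range v) :=
  (span_le (p := (span K (range v)).comap g)).mpr (range_subset_iff.mpr hg) hx

namespace IsWeightString

variable {h e f : Module.End K M} {n : ℕ} {v : Fin (n + 1) → M}

theorem apply_h_mem_span (hv : IsWeightString h e f v) {x : M} (hx : x ∈ span K (range v)) :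
    h x ∈ span K (range v) :=
  apply_mem_span_range (fun i => by
    rw [hv.apply_h]; exact smul_mem _ _ (subset_span (mem_range_self i))) hx

theorem apply_e_mem_span (hv : IsWeightString h e f v) {x : M} (hx : x ∈ span K (range v)) :
    e x ∈ span K (range v) := by
  refine apply_mem_span_range (fun i => ?_) hx
  induction i using Fin.cases with
  | zero => rw [hv.apply_e_zero]; exact zero_mem _
  | succ k =>
    obtain ⟨c, -, hc⟩ := hv.apply_e_succ k
    rw [hc]; exact smul_mem _ _ (subset_span (mem_range_self _))

theorem apply_f_mem_span (hv : IsWeightString h e f v) {x : M} (hx : x ∈ span K (range v)) :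
    f x ∈ span K (range v) := by
  refine apply_mem_span_range (fun i => ?_) hx
  induction i using Fin.lastCases with
  | last => rw [hv.apply_f_last]; exact zero_mem _
  | cast k =>
    obtain ⟨c, -, hc⟩ := hv.apply_f_castSucc k
    rw [hc]; exact smul_mem _ _ (subset_span (mem_range_self _))

theorem mem_iff_mem (hv : IsWeightString h e f v) {U : Submodule K M}
    (hUe : ∀ x ∈ U, e x ∈ U) (hUf : ∀ x ∈ U, f x ∈ U) (i j : Fin (n + 1)) :
    v i ∈ U ↔ v j ∈ U := by
  suffices h0 : ∀ i, v i ∈ U ↔ v 0 ∈ U from (h0 i).trans (h0 j).symm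
  intro i
  induction i using Fin.induction with
  | zero => rfl
  | succ k ih =>
    refine Iff.trans ⟨fun hk => ?_, fun hk => ?_⟩ ih
    · obtain ⟨c, hc, hce⟩ := hv.apply_e_succ k
      simpa [hce, U.smul_mem_iff hc] using hUe _ hk
    · obtain ⟨c, hc, hcf⟩ := hv.apply_f_castSucc k
      simpa [hcf, U.smul_mem_iff hc] using hUf _ hk

theorem weight_injective [CharZero K] :
    Function.Injective fun i : Fin (n + 1) => (n : K) - 2 * (i : ℕ) := by
  intro i j hij
  have : ((i : ℕ) : K) = (j : ℕ) := by linear_combination -hij / 2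
  exact Fin.ext (by exact_mod_cast this)

theorem eq_bot_or_eq_span [CharZero K] (hv : IsWeightString h e f v) {U : Submodule K M}
    (hU : U ≤ span K (range v)) (hUh : ∀ x ∈ U, h x ∈ U) (hUe : ∀ x ∈ U, e x ∈ U)
    (hUf : ∀ x ∈ U, f x ∈ U) : U = ⊥ ∨ U = span K (range v) := by
  refine or_iff_not_imp_left.mpr fun hne => le_antisymm hU ?_
  obtain ⟨u, huU, hu0⟩ := U.ne_bot_iff.mp hne
  obtain ⟨c, rfl⟩ := (mem_span_range_iff_exists_fun K).mp (hU huU)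
  have hcomp := mem_of_sum_mem_of_eigenvectors h hUh weight_injective Finset.univ
    (fun i => c i • v i) (fun i => by rw [map_smul, hv.apply_h, smul_comm]) huU
  obtain ⟨i, -, hi⟩ := Finset.exists_ne_zero_of_sum_ne_zero hu0
  have hvi : v i ∈ U := (U.smul_mem_iff (left_ne_zero_of_smul hi)).mp (hcomp i (Finset.mem_univ i))
  exact span_le.mpr (range_subset_iff.mpr fun j => (hv.mem_iff_mem hUe hUf i j).mp hvi)

end IsWeightString

end WeightString

section FiniteDimensional

variable {K M : Type*} [Field K] [AddCommGroup M] [Module K M] [FiniteDimensional K M]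

theorem finrank_le_add_of_sup_eq_top {A B C D : Submodule K M} (htop : A ⊔ B ⊔ C ⊔ D = ⊤) :
    Module.finrank K M ≤ Module.finrank K A + Module.finrank K B + Module.finrank K C +
      Module.finrank K D := by
  rw [← finrank_top K M, ← htop]
  have := finrank_add_le_finrank_add_finrank (A ⊔ B ⊔ C) D
  have := finrank_add_le_finrank_add_finrank (A ⊔ B) C
  have := finrank_add_le_finrank_add_finrank A B
  omega

theorem inf_eq_bot_of_sup_eq_top_of_finrank_add_le {P Q : Submodule K M} (hPQ : P ⊔ Q = ⊤)
    (hdim : Module.finrank K P + Module.finrank K Q ≤ Module.finrank K M) : P ⊓ Q = ⊥ := by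
  have := finrank_sup_add_finrank_inf_eq P Q
  rw [hPQ, finrank_top] at this
  exact finrank_eq_zero.mp (by omega)

theorem inf_sup_eq_bot_of_sup_eq_top_of_finrank_add_le {A B C D : Submodule K M}
    (htop : A ⊔ B ⊔ C ⊔ D = ⊤)
    (hdim : Module.finrank K A + Module.finrank K B + Module.finrank K C + Module.finrank K D ≤
      Module.finrank K M) :
    A ⊓ (B ⊔ C ⊔ D) = ⊥ ∧ B ⊓ (A ⊔ C ⊔ D) = ⊥ ∧ C ⊓ (A ⊔ B ⊔ D) = ⊥ ∧
      D ⊓ (A ⊔ B ⊔ C) = ⊥ := by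
  have key : ∀ P Q R S : Submodule K M, P ⊔ (Q ⊔ R ⊔ S) = ⊤ →
      Module.finrank K P + Module.finrank K Q + Module.finrank K R + Module.finrank K S ≤
        Module.finrank K M → P ⊓ (Q ⊔ R ⊔ S) = ⊥ := by
    intro P Q R S hPQ hdim
    refine inf_eq_bot_of_sup_eq_top_of_finrank_add_le hPQ ?_
    have := finrank_add_le_finrank_add_finrank (Q ⊔ R) S
    have := finrank_add_le_finrank_add_finrank Q R
    omega
  refine ⟨key _ _ _ _ ?_ ?_, key _ _ _ _ ?_ ?_, key _ _ _ _ ?_ ?_, key _ _ _ _ ?_ ?_⟩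
  all_goals first | (rw [← htop]; ac_rfl) | omega

end FiniteDimensional

section Lie

variable {K L : Type*} [Field K] [LieRing L] [LieAlgebra K L]

theorem lie_mem_of_mem_span {S : Set L} {V : Submodule K L} (hS : ∀ x ∈ S, ∀ u ∈ V, ⁅x, u⁆ ∈ V) :
    ∀ x ∈ span K S, ∀ u ∈ V, ⁅x, u⁆ ∈ V := by
  intro x hx u hu
  induction hx using span_induction with
  | mem x hx => exact hS x hx u hu
  | zero => simp
  | add x y _ _ hx hy => rw [add_lie]; exact add_mem hx hy
  | smul c x _ hx => rw [smul_lie]; exact smul_mem _ c hx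

variable {n : ℕ} {v : Fin (n + 1) → L} {a b c : L}

theorem IsWeightString.lie_mem_span (hv : IsWeightString (ad K L a) (ad K L b) (ad K L c) v) :
    ∀ x ∈ span K {a, b, c}, ∀ u ∈ span K (range v), ⁅x, u⁆ ∈ span K (range v) := by
  refine lie_mem_of_mem_span ?_
  rintro x (rfl | rfl | rfl) u hu
  exacts [hv.apply_h_mem_span hu, hv.apply_e_mem_span hu, hv.apply_f_mem_span hu]

theorem IsWeightString.eq_bot_or_eq_span_of_lie_mem [CharZero K]
    (hv : IsWeightString (ad K L a) (ad K L b) (ad K L c) v) {U : Submodule K L}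
    (hU : U ≤ span K (range v)) (hUinv : ∀ x ∈ span K {a, b, c}, ∀ u ∈ U, ⁅x, u⁆ ∈ U) :
    U = ⊥ ∨ U = span K (range v) :=
  hv.eq_bot_or_eq_span hU (hUinv a (subset_span (by simp))) (hUinv b (subset_span (by simp)))
    (hUinv c (subset_span (by simp)))

end Lie

variable {Hα Hβ : L} {X : ℤ × ℤ → L}

/-- `Phi` as a `Finset`, so that root-membership side conditions can be closed by `decide`. -/
def rootFinset : Finset (ℤ × ℤ) :=
  {(1,0), (0,1), (1,1), (2,1), (3,1), (3,2),
   (-1,0), (0,-1), (-1,-1), (-2,-1), (-3,-1), (-3,-2)}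

theorem mem_Phi {μ : ℤ × ℤ} : μ ∈ Phi ↔ μ ∈ rootFinset := by simp [Phi, rootFinset]

namespace IsG2

variable {μ ν : ℤ × ℤ}

theorem lie_Hα_X (h : IsG2 Hα Hβ X) (hν : ν ∈ rootFinset) :
    ⁅Hα, X ν⁆ = ((2 * ν.1 - 3 * ν.2 : ℤ) : ℂ) • X ν := by
  rw [← show Hr Hα Hβ (1,0) = Hα by simp [Hr, ip],
    h.bracket_hx _ (by simp [Phi]) _ (mem_Phi.mpr hν)]
  simp only [cart, ip]; push_cast; ring_nf

theorem lie_Hβ_X (h : IsG2 Hα Hβ X) (hν : ν ∈ rootFinset) :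
    ⁅Hβ, X ν⁆ = ((2 * ν.2 - ν.1 : ℤ) : ℂ) • X ν := by
  rw [← show Hr Hα Hβ (0,1) = Hβ by simp [Hr, ip],
    h.bracket_hx _ (by simp [Phi]) _ (mem_Phi.mpr hν)]
  simp only [cart, ip]; push_cast; ring_nf

theorem lie_X_Hα (h : IsG2 Hα Hβ X) (hν : ν ∈ rootFinset) :
    ⁅X ν, Hα⁆ = ((3 * ν.2 - 2 * ν.1 : ℤ) : ℂ) • X ν := by
  rw [← lie_skew, h.lie_Hα_X hν, ← neg_smul]; push_cast; ring_nf

theorem lie_X_Hβ (h : IsG2 Hα Hβ X) (hν : ν ∈ rootFinset) :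
    ⁅X ν, Hβ⁆ = ((ν.1 - 2 * ν.2 : ℤ) : ℂ) • X ν := by
  rw [← lie_skew, h.lie_Hβ_X hν, ← neg_smul]; push_cast; ring_nf

theorem lie_Hβ_Hα (h : IsG2 Hα Hβ X) : ⁅Hβ, Hα⁆ = 0 := by
  rw [← lie_skew, h.bracket_hh, neg_zero]

theorem lie_X_X_of_add_mem (h : IsG2 Hα Hβ X) (hμ : μ ∈ rootFinset) (hν : ν ∈ rootFinset)
    (hμν : μ + ν ∈ rootFinset) : ⁅X μ, X ν⁆ = ((Nc μ ν : ℤ) : ℂ) • X (μ + ν) :=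
  h.bracket_xx μ (mem_Phi.mpr hμ) ν (mem_Phi.mpr hν) (mem_Phi.mpr hμν)

theorem lie_X_X_of_add_notMem (h : IsG2 Hα Hβ X) (hμ : μ ∈ rootFinset) (hν : ν ∈ rootFinset)
    (hμν₀ : μ + ν ≠ 0) (hμν : μ + ν ∉ rootFinset) : ⁅X μ, X ν⁆ = 0 :=
  h.bracket_xx_zero μ (mem_Phi.mpr hμ) ν (mem_Phi.mpr hν) hμν₀ (mt mem_Phi.mp hμν)

theorem lie_X_X_of_add_eq_zero (h : IsG2 Hα Hβ X) (hμ : μ ∈ rootFinset) (hμν : μ + ν = 0) :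
    ⁅X μ, X ν⁆ = Hr Hα Hβ μ := by
  rw [← h.bracket_xnegx μ (mem_Phi.mpr hμ), eq_neg_of_add_eq_zero_right hμν]

end IsG2

def a1fourF (Hα Hβ : L) : L := (2:ℂ) • Hα + (2:ℂ) • Hβ

noncomputable def a1fourEPlus (X : ℤ × ℤ → L) : L := (Real.sqrt 2 : ℂ) • (X (0,-1) + X (3,2))

noncomputable def a1fourEMinus (X : ℤ × ℤ → L) : L := (Real.sqrt 2 : ℂ) • (X (0,1) + X (-3,-2))

theorem IsG2.lie_a1fourF_X (h : IsG2 Hα Hβ X) {ν : ℤ × ℤ} (hν : ν ∈ rootFinset) :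
    ⁅a1fourF Hα Hβ, X ν⁆ = ((2 * (ν.1 - ν.2) : ℤ) : ℂ) • X ν := by
  rw [a1fourF, add_lie, smul_lie, smul_lie, h.lie_Hα_X hν, h.lie_Hβ_X hν, smul_smul, smul_smul,
    ← add_smul]
  push_cast; ring_nf

theorem ofReal_sqrt_two_ne_zero : (Real.sqrt 2 : ℂ) ≠ 0 := by norm_num

-- Without `-Complex.coe_smul`, simp rewrites `(√2 : ℂ) • _` as an `ℝ`-action, which the Lie
-- bracket lemmas cannot see through.
theorem IsG2.isWeightString_V1four (h : IsG2 Hα Hβ X) :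
    IsWeightString (ad ℂ L (a1fourF Hα Hβ)) (ad ℂ L (a1fourEPlus X)) (ad ℂ L (a1fourEMinus X))
      ![X (1,0), X (1,1), X (-2,-1)] where
  apply_h i := by fin_cases i <;> simp (disch := decide) [h.lie_a1fourF_X]; norm_num
  apply_e_zero := by
    simp (disch := decide) [a1fourEPlus, h.lie_X_X_of_add_notMem, -Complex.coe_smul]
  apply_e_succ k := ⟨![√2, √2] k, by fin_cases k <;> simp,
    by fin_cases k <;> simp (disch := decide) [a1fourEPlus, h.lie_X_X_of_add_mem,
      h.lie_X_X_of_add_notMem, -Complex.coe_smul] <;> norm_num [Nc, N0]⟩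
  apply_f_last := by
    simp (disch := decide) [a1fourEMinus, h.lie_X_X_of_add_notMem, -Complex.coe_smul]
  apply_f_castSucc k := ⟨![√2, √2] k, by fin_cases k <;> simp,
    by fin_cases k <;> simp (disch := decide) [a1fourEMinus, h.lie_X_X_of_add_mem,
      h.lie_X_X_of_add_notMem, -Complex.coe_smul] <;> norm_num [Nc, N0]⟩

theorem IsG2.isWeightString_V2four (h : IsG2 Hα Hβ X) :
    IsWeightString (ad ℂ L (a1fourF Hα Hβ)) (ad ℂ L (a1fourEPlus X)) (ad ℂ L (a1fourEMinus X))
      ![X (2,1), X (-1,-1), X (-1,0)] where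
  apply_h i := by fin_cases i <;> simp (disch := decide) [h.lie_a1fourF_X]; norm_num
  apply_e_zero := by
    simp (disch := decide) [a1fourEPlus, h.lie_X_X_of_add_notMem, -Complex.coe_smul]
  apply_e_succ k := ⟨![-√2, -√2] k, by fin_cases k <;> simp,
    by fin_cases k <;> simp (disch := decide) [a1fourEPlus, h.lie_X_X_of_add_mem,
      h.lie_X_X_of_add_notMem, -Complex.coe_smul] <;> norm_num [Nc, N0]⟩
  apply_f_last := by
    simp (disch := decide) [a1fourEMinus, h.lie_X_X_of_add_notMem, -Complex.coe_smul]
  apply_f_castSucc k := ⟨![-√2, -√2] k, by fin_cases k <;> simp,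
    by fin_cases k <;> simp (disch := decide) [a1fourEMinus, h.lie_X_X_of_add_mem,
      h.lie_X_X_of_add_notMem, -Complex.coe_smul] <;> norm_num [Nc, N0]⟩

theorem IsG2.isWeightString_V3four (h : IsG2 Hα Hβ X) :
    IsWeightString (ad ℂ L (a1fourF Hα Hβ)) (ad ℂ L (a1fourEPlus X)) (ad ℂ L (a1fourEMinus X))
      ![X (3,1), X (0,-1) - X (3,2), Hα + (3:ℂ) • Hβ, X (0,1) - X (-3,-2), X (-3,-1)] where
  apply_h i := by
    fin_cases i <;> simp (disch := decide) [a1fourF, h.lie_Hα_X, h.lie_Hβ_X, h.bracket_hh,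
      h.lie_Hβ_Hα, -Complex.coe_smul] <;> norm_num <;> module
  apply_e_zero := by
    simp (disch := decide) [a1fourEPlus, h.lie_X_X_of_add_notMem, -Complex.coe_smul]
  apply_e_succ k := ⟨![-2 * √2, 3 * √2, -√2, √2] k, by fin_cases k <;> simp,
    by fin_cases k <;> simp (disch := decide) [a1fourEPlus, h.lie_X_X_of_add_mem,
      h.lie_X_X_of_add_notMem, h.lie_X_X_of_add_eq_zero, h.lie_X_Hα, h.lie_X_Hβ,
      -Complex.coe_smul] <;> norm_num [Nc, N0, Hr, ip] <;> module⟩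
  apply_f_last := by
    simp (disch := decide) [a1fourEMinus, h.lie_X_X_of_add_notMem, -Complex.coe_smul]
  apply_f_castSucc k := ⟨![-√2, √2, -3 * √2, 2 * √2] k, by fin_cases k <;> simp,
    by fin_cases k <;> simp (disch := decide) [a1fourEMinus, h.lie_X_X_of_add_mem,
      h.lie_X_X_of_add_notMem, h.lie_X_X_of_add_eq_zero, h.lie_X_Hα, h.lie_X_Hβ,
      -Complex.coe_smul] <;> norm_num [Nc, N0, Hr, ip] <;> module⟩

theorem V1four_eq_span : V1four X = span ℂ (range ![X (1,0), X (1,1), X (-2,-1)]) := by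
  rw [V1four, Matrix.range_cons, Matrix.range_cons_cons_empty, Set.singleton_union]

theorem V2four_eq_span : V2four X = span ℂ (range ![X (2,1), X (-1,-1), X (-1,0)]) := by
  rw [V2four]; congr 1; ext; simp

theorem V3four_eq_span : V3four Hα Hβ X = span ℂ
    (range ![X (3,1), X (0,-1) - X (3,2), Hα + (3:ℂ) • Hβ, X (0,1) - X (-3,-2), X (-3,-1)]) := by
  rw [V3four]; congr 1; ext; simp; tauto

theorem finrank_span_three_le (a b c : L) : Module.finrank ℂ (span ℂ {a, b, c}) ≤ 3 := by
  have := finrank_range_le_card (R := ℂ) ![a, b, c]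
  rwa [Matrix.range_cons, Matrix.range_cons_cons_empty, Set.singleton_union] at this

theorem IsG2.finiteDimensional (h : IsG2 Hα Hβ X) : FiniteDimensional ℂ L :=
  .of_basis (Module.Basis.mk h.indep h.span_top.ge)

theorem IsG2.finrank_eq (h : IsG2 Hα Hβ X) : Module.finrank ℂ L = 14 := by
  simpa using Module.finrank_eq_card_basis (Module.Basis.mk h.indep h.span_top.ge)

theorem IsG2.sup_eq_top (h : IsG2 Hα Hβ X) :
    span ℂ {a1fourF Hα Hβ, a1fourEPlus X, a1fourEMinus X} ⊔ V1four X ⊔ V2four X ⊔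
      V3four Hα Hβ X = ⊤ := by
  set S := span ℂ {a1fourF Hα Hβ, a1fourEPlus X, a1fourEMinus X} ⊔ V1four X ⊔ V2four X ⊔
    V3four Hα Hβ X
  have hA : ∀ x ∈ ({a1fourF Hα Hβ, a1fourEPlus X, a1fourEMinus X} : Set L), x ∈ S :=
    fun x hx => mem_sup_left (mem_sup_left (mem_sup_left (subset_span hx)))
  have h1 : ∀ x ∈ ({X (1,0), X (1,1), X (-2,-1)} : Set L), x ∈ S :=
    fun x hx => mem_sup_left (mem_sup_left (mem_sup_right (subset_span hx)))
  have h2 : ∀ x ∈ ({X (-1,0), X (-1,-1), X (2,1)} : Set L), x ∈ S :=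
    fun x hx => mem_sup_left (mem_sup_right (subset_span hx))
  have h3 : ∀ x ∈ ({X (3,1), X (-3,-1), Hα + (3:ℂ) • Hβ, X (0,1) - X (-3,-2),
      X (0,-1) - X (3,2)} : Set L), x ∈ S :=
    fun x hx => mem_sup_right (subset_span hx)
  have hsplit : ∀ {x y : L}, x + y ∈ S → x - y ∈ S → x ∈ S ∧ y ∈ S := fun hp hm =>
    ⟨by convert S.smul_mem (1/2 : ℂ) (add_mem hp hm) using 1; module,
     by convert S.smul_mem (1/2 : ℂ) (sub_mem hp hm) using 1; module⟩
  have hF : a1fourF Hα Hβ ∈ S := hA _ (by simp)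
  have hH : Hα + (3:ℂ) • Hβ ∈ S := h3 _ (by simp)
  have hHα : Hα ∈ S := by
    convert S.smul_mem (1/4 : ℂ) (sub_mem (S.smul_mem 3 hF) (S.smul_mem 2 hH)) using 1
    simp only [a1fourF]; module
  have hHβ : Hβ ∈ S := by
    convert S.smul_mem (1/4 : ℂ) (sub_mem (S.smul_mem 2 hH) hF) using 1
    simp only [a1fourF]; module
  obtain ⟨h01, h32⟩ := hsplit
    ((S.smul_mem_iff ofReal_sqrt_two_ne_zero).mp (hA (a1fourEPlus X) (by simp)))
    (h3 (X (0,-1) - X (3,2)) (by simp))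
  obtain ⟨h10, h23⟩ := hsplit
    ((S.smul_mem_iff ofReal_sqrt_two_ne_zero).mp (hA (a1fourEMinus X) (by simp)))
    (h3 (X (0,1) - X (-3,-2)) (by simp))
  rw [eq_top_iff, ← h.span_top, span_le, range_subset_iff]
  intro i
  fin_cases i <;>
    simp only [chev, Fin.zero_eta, Fin.mk_one, Fin.reduceFinMk, Matrix.cons_val, SetLike.mem_coe]
  exacts [hHα, hHβ, h1 _ (by simp), h2 _ (by simp), h10, h01, h1 _ (by simp), h2 _ (by simp),
    h2 _ (by simp), h1 _ (by simp), h3 _ (by simp), h3 _ (by simp), h32, h23]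

theorem finrank_V1four_le : Module.finrank ℂ (V1four X) ≤ 3 :=
  V1four_eq_span (X := X) ▸ finrank_range_le_card _

theorem finrank_V2four_le : Module.finrank ℂ (V2four X) ≤ 3 :=
  V2four_eq_span (X := X) ▸ finrank_range_le_card _

theorem finrank_V3four_le : Module.finrank ℂ (V3four Hα Hβ X) ≤ 5 :=
  V3four_eq_span (Hα := Hα) (Hβ := Hβ) (X := X) ▸ finrank_range_le_card _

/-- **Theorem.**  (Part of Proposition 2 of the paper.)  For
`A₁⁴ = ℂf ⊕ ℂe₊ ⊕ ℂe₋` with `f = 2H_α + 2H_β`, `e₊ = √2(X_{-β} + X_{3α+2β})`,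
`e₋ = √2(X_β + X_{-(3α+2β)})`, one has `G₂ = A₁⁴ ⊕ V₁ ⊕ V₂ ⊕ V₃` as `A₁⁴`-modules under
the adjoint action, where `V₁`, `V₂` are irreducible of dimension `3` (copies of `D₁`) and
`V₃` is irreducible of dimension `5` (a copy of `D₂`). -/
theorem adjoint_decomposition_for_A1four
    (Hα Hβ : L) (X : ℤ × ℤ → L) (hG2 : IsG2 Hα Hβ X)
    (f ep em : L)
    (hf : f = (2:ℂ) • Hα + (2:ℂ) • Hβ)
    (hep : ep = (Real.sqrt 2 : ℂ) • (X (0,-1) + X (3,2)))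
    (hem : em = (Real.sqrt 2 : ℂ) • (X (0,1) + X (-3,-2))) :
    (∀ x ∈ Submodule.span ℂ ({f, ep, em} : Set L), ∀ v ∈ V1four X, ⁅x, v⁆ ∈ V1four X) ∧
    (∀ x ∈ Submodule.span ℂ ({f, ep, em} : Set L), ∀ v ∈ V2four X, ⁅x, v⁆ ∈ V2four X) ∧
    (∀ x ∈ Submodule.span ℂ ({f, ep, em} : Set L), ∀ v ∈ V3four Hα Hβ X,
      ⁅x, v⁆ ∈ V3four Hα Hβ X) ∧
    Module.finrank ℂ ↥(V1four X (L := L)) = 3 ∧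
    Module.finrank ℂ ↥(V2four X (L := L)) = 3 ∧
    Module.finrank ℂ ↥(V3four Hα Hβ X) = 5 ∧
    (∀ U : Submodule ℂ L, U ≤ V1four X →
      (∀ x ∈ Submodule.span ℂ ({f, ep, em} : Set L), ∀ u ∈ U, ⁅x, u⁆ ∈ U) →
      U = ⊥ ∨ U = V1four X) ∧
    (∀ U : Submodule ℂ L, U ≤ V2four X →
      (∀ x ∈ Submodule.span ℂ ({f, ep, em} : Set L), ∀ u ∈ U, ⁅x, u⁆ ∈ U) →
      U = ⊥ ∨ U = V2four X) ∧
    (∀ U : Submodule ℂ L, U ≤ V3four Hα Hβ X →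
      (∀ x ∈ Submodule.span ℂ ({f, ep, em} : Set L), ∀ u ∈ U, ⁅x, u⁆ ∈ U) →
      U = ⊥ ∨ U = V3four Hα Hβ X) ∧
    Submodule.span ℂ ({f, ep, em} : Set L) ⊔ V1four X ⊔ V2four X ⊔ V3four Hα Hβ X = ⊤ ∧
    Submodule.span ℂ ({f, ep, em} : Set L) ⊓ (V1four X ⊔ V2four X ⊔ V3four Hα Hβ X) = ⊥ ∧
    V1four X ⊓ (Submodule.span ℂ ({f, ep, em} : Set L) ⊔ V2four X ⊔ V3four Hα Hβ X) = ⊥ ∧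
    V2four X ⊓ (Submodule.span ℂ ({f, ep, em} : Set L) ⊔ V1four X ⊔ V3four Hα Hβ X) = ⊥ ∧
    V3four Hα Hβ X ⊓ (Submodule.span ℂ ({f, ep, em} : Set L) ⊔ V1four X ⊔ V2four X) = ⊥ := by
  obtain rfl : f = a1fourF Hα Hβ := hf
  obtain rfl : ep = a1fourEPlus X := hep
  obtain rfl : em = a1fourEMinus X := hem
  have := hG2.finiteDimensional
  have htop := hG2.sup_eq_top
  have hdim := finrank_le_add_of_sup_eq_top htop
  have hA := finrank_span_three_le (a1fourF Hα Hβ) (a1fourEPlus X) (a1fourEMinus X)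
  have h1 := finrank_V1four_le (X := X)
  have h2 := finrank_V2four_le (X := X)
  have h3 := finrank_V3four_le (Hα := Hα) (Hβ := Hβ) (X := X)
  have h14 := hG2.finrank_eq
  obtain ⟨hdisjA, hdisj1, hdisj2, hdisj3⟩ :=
    inf_sup_eq_bot_of_sup_eq_top_of_finrank_add_le htop (by omega)
  have hV1 := hG2.isWeightString_V1four
  have hV2 := hG2.isWeightString_V2four
  have hV3 := hG2.isWeightString_V3four
  rw [V1four_eq_span, V2four_eq_span, V3four_eq_span] at *
  exact ⟨hV1.lie_mem_span, hV2.lie_mem_span, hV3.lie_mem_span, by omega, by omega, by omega,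
    fun _ hU => hV1.eq_bot_or_eq_span_of_lie_mem hU,
    fun _ hU => hV2.eq_bot_or_eq_span_of_lie_mem hU,
    fun _ hU => hV3.eq_bot_or_eq_span_of_lie_mem hU, htop, hdisjA, hdisj1, hdisj2, hdisj3⟩

end G2Formal
end
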